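/- For every θ ∈ [0, π], every γ ∈ [0, 1], and every real u with |u − cos θ| ≤ γ, one has |arccos(u) − θ| ≤ 2·√γ. (This is the quantitative arccos-perturbation estimate, 'arccos(cos θ ± γ) = θ ± 2√γ', used in the proof that ρ_ε ≤ 2√(5ε).) -/

import Mathlib

/-!
For `0 ≤ θ ≤ φ ≤ π` the half-angle formulas give
`cos θ - cos φ = 2 sin((φ+θ)/2) sin((φ-θ)/2) ≥ 2 sin²((φ-θ)/2) = 1 - cos (φ - θ)`.
If this is at most `γ ≤ 1`, then `cos (φ - θ) ≥ 0`, so `φ - θ ≤ π/2 < 2`, and on that range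
`1 - cos x ≥ x² / 4` (from `sin y ≥ y - y³/6`), whence `φ - θ ≤ 2√γ`. Finally `cos (arccos u)`
is `u` clamped to `[-1, 1]`, which is no farther from `cos θ` than `u` is.
-/

open Real Set

lemma sq_le_two_mul_sin_sq {y : ℝ} (h0 : 0 ≤ y) (h1 : y ≤ 1) : y ^ 2 ≤ 2 * sin y ^ 2 := by
  have hcube := sin_ge_sub_cube h0
  have hcube_le : y ^ 3 ≤ y := by
    nlinarith [mul_nonneg (mul_nonneg h0 (sub_nonneg.2 h1)) (by linarith : 0 ≤ 1 + y)]
  nlinarith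

lemma sq_div_four_le_one_sub_cos {x : ℝ} (hx : |x| ≤ 2) : x ^ 2 / 4 ≤ 1 - cos x := by
  have hhalf : 1 - cos x = 2 * sin (|x| / 2) ^ 2 := by
    have h := cos_two_mul (|x| / 2)
    rw [mul_div_cancel₀ _ two_ne_zero, cos_abs, cos_sq'] at h
    linarith
  rw [hhalf, ← sq_abs x]
  have := sq_le_two_mul_sin_sq (y := |x| / 2) (by positivity) (by linarith)
  linarith

lemma one_sub_cos_sub_le_cos_sub_cos {θ φ : ℝ} (hθ : 0 ≤ θ) (hθφ : θ ≤ φ) (hφ : φ ≤ π) :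
    1 - cos (φ - θ) ≤ cos θ - cos φ := by
  set d := (φ - θ) / 2 with hd_def
  set s := (φ + θ) / 2
  have hcos : cos θ - cos φ = 2 * sin s * sin d := by
    rw [cos_sub_cos, show (θ + φ) / 2 = s by ring, show (θ - φ) / 2 = -d by ring, sin_neg]
    ring
  have hone : 1 - cos (φ - θ) = 2 * sin d ^ 2 := by
    rw [show φ - θ = 2 * d by ring, cos_two_mul, cos_sq']
    ring
  -- `sin s - sin d = 2 sin (θ / 2) cos (φ / 2)`, and both factors are nonnegative.
  have hsd : sin d ≤ sin s := by
    have hdiff := sin_sub_sin s d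
    rw [show (s - d) / 2 = θ / 2 by ring, show (s + d) / 2 = φ / 2 by ring] at hdiff
    have hsin := sin_nonneg_of_nonneg_of_le_pi (x := θ / 2) (by linarith) (by linarith)
    have hcos_half := cos_nonneg_of_neg_pi_div_two_le_of_le (x := φ / 2) (by linarith) (by linarith)
    nlinarith
  have hd : 0 ≤ sin d :=
    sin_nonneg_of_nonneg_of_le_pi (by linarith [hd_def]) (by linarith [hd_def])
  rw [hcos, hone]
  nlinarith

lemma sub_le_two_mul_sqrt_of_cos_sub_cos_le {θ φ γ : ℝ} (hθ : 0 ≤ θ) (hθφ : θ ≤ φ) (hφ : φ ≤ π)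
    (hγ : γ ≤ 1) (h : cos θ - cos φ ≤ γ) : φ - θ ≤ 2 * √γ := by
  have hone : 1 - cos (φ - θ) ≤ γ := (one_sub_cos_sub_le_cos_sub_cos hθ hθφ hφ).trans h
  have hle_half_pi : φ - θ ≤ π / 2 := by
    by_contra! hlt
    have hneg := cos_neg_of_pi_div_two_lt_of_lt hlt (by linarith [pi_pos])
    linarith
  have hsq := sq_div_four_le_one_sub_cos (x := φ - θ)
    (by rw [abs_of_nonneg (by linarith)]; linarith [pi_le_four])
  have hsqrt := abs_le_sqrt (x := (φ - θ) / 2) (y := γ) (by linarith)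
  linarith [le_abs_self ((φ - θ) / 2)]

lemma abs_sub_le_two_mul_sqrt_of_abs_cos_sub_cos_le {θ φ γ : ℝ} (hθ : θ ∈ Icc 0 π)
    (hφ : φ ∈ Icc 0 π) (hγ : γ ≤ 1) (h : |cos φ - cos θ| ≤ γ) : |φ - θ| ≤ 2 * √γ := by
  rw [abs_le] at h
  rcases le_total θ φ with hθφ | hφθ
  · rw [abs_of_nonneg (sub_nonneg.2 hθφ)]
    exact sub_le_two_mul_sqrt_of_cos_sub_cos_le hθ.1 hθφ hφ.2 hγ (by linarith)
  · rw [abs_sub_comm, abs_of_nonneg (sub_nonneg.2 hφθ)]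
    exact sub_le_two_mul_sqrt_of_cos_sub_cos_le hφ.1 hφθ hθ.2 hγ (by linarith)

lemma abs_cos_arccos_sub_le {u c : ℝ} (hc₁ : -1 ≤ c) (hc₂ : c ≤ 1) :
    |cos (arccos u) - c| ≤ |u - c| := by
  rcases lt_or_ge u (-1) with hu | hu
  · rw [arccos_eq_pi.2 hu.le, cos_pi, abs_le, abs_of_neg (by linarith)]
    constructor <;> linarith
  rcases le_or_gt u 1 with hu' | hu'
  · rw [cos_arccos hu hu']
  · rw [arccos_eq_zero.2 hu'.le, cos_zero, abs_le, abs_of_pos (by linarith)]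
    constructor <;> linarith

theorem stmt_10 (θ : ℝ) (hθ : θ ∈ Set.Icc 0 Real.pi) (γ : ℝ) (hγ1 : γ ≤ 1)
    (u : ℝ) (hu : |u - Real.cos θ| ≤ γ) :
    |Real.arccos u - θ| ≤ 2 * Real.sqrt γ :=
  abs_sub_le_two_mul_sqrt_of_abs_cos_sub_cos_le hθ ⟨arccos_nonneg u, arccos_le_pi u⟩ hγ1
    ((abs_cos_arccos_sub_le (neg_one_le_cos θ) (cos_le_one θ)).trans hu)
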